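/- arXiv:1603.09048 — 3 statements merged into one kernel-verified Lean document; each statement's English description precedes it below -/
import Mathlib

section
/- (Theorem 1, metric-space form.) Let (Z, d) be a metric space, let z, z̃, z_q ∈ Z satisfy d(z̃, z_q) ≤ d(z̃, z), and let b be a nonnegative real number. Then b² ≤ 5·((d(z, z_q) − b)² + d(z, z̃)²). -/
theorem thm1_metric {Z : Type*} [MetricSpace Z] (z ztil zq : Z)
    (h : dist ztil zq ≤ dist ztil z) (b : ℝ) (hb : 0 ≤ b) :
    b ^ 2 ≤ 5 * ((dist z zq - b) ^ 2 + dist z ztil ^ 2) := by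
  have h1 : dist z zq ≤ dist z ztil + dist ztil zq := dist_triangle _ _ _
  have h2 : dist ztil z = dist z ztil := dist_comm _ _
  have h3 : dist z zq ≤ 2 * dist z ztil := by linarith
  nlinarith [sq_nonneg (2*b - 5/2 * dist z zq), dist_nonneg (x := z) (y := zq), dist_nonneg (x := z) (y := ztil)]
end

section
/- (Theorem 1, nearest-neighbor form.) Let (Z, d) be a metric space, let Q be a nonempty finite subset of Z, let z ∈ Q, let z̃ ∈ Z, and let z_q ∈ Q be a point of Q minimizing the distance to z̃, i.e., d(z̃, z_q) ≤ d(z̃, u) for all u ∈ Q. Then for every nonnegative real number b, b² ≤ 5·((d(z, z_q) − b)² + d(z, z̃)²). -/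
theorem thm1_nearest_neighbor {Z : Type*} [MetricSpace Z] (Q : Finset Z)
    (hQ : Q.Nonempty) (z : Z) (hz : z ∈ Q) (ztil : Z) (zq : Z) (hzq : zq ∈ Q)
    (hmin : ∀ u ∈ Q, dist ztil zq ≤ dist ztil u) (b : ℝ) (hb : 0 ≤ b) :
    b ^ 2 ≤ 5 * ((dist z zq - b) ^ 2 + dist z ztil ^ 2) := by
  have h1 : dist ztil zq ≤ dist ztil z := hmin z hz
  have h2 : dist z zq ≤ dist z ztil + dist ztil zq := dist_triangle z ztil zq
  have h3 : dist ztil z = dist z ztil := dist_comm ztil z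
  have h4 : dist z zq ≤ 2 * dist z ztil := by linarith
  nlinarith [sq_nonneg (5/2 * dist z zq - 2 * b), dist_nonneg (x := z) (y := zq),
    dist_nonneg (x := z) (y := ztil), sq_nonneg (dist z zq - b)]
end

section
/- (Corollary of Theorem 1 with the square-root isotonic function.) Let (Z, d) be a metric space, let z, z̃, z_q ∈ Z satisfy d(z̃, z_q) ≤ d(z̃, z), and let c ≥ 0 be a real number. Then c ≤ 5·((d(z, z_q) − √c)² + d(z, z̃)²). -/
theorem thm1_sqrt {Z : Type*} [MetricSpace Z] (z ztil zq : Z)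
    (h : dist ztil zq ≤ dist ztil z) (c : ℝ) (hc : 0 ≤ c) :
    c ≤ 5 * ((dist z zq - Real.sqrt c) ^ 2 + dist z ztil ^ 2) := by
  have ht : dist z zq ≤ dist z ztil + dist ztil zq := dist_triangle z ztil zq
  have h2 : dist z zq ≤ 2 * dist z ztil := by
    have := dist_comm z ztil ▸ h
    linarith [dist_comm ztil z ▸ h]
  have hs : Real.sqrt c ^ 2 = c := Real.sq_sqrt hc
  nlinarith [Real.sqrt_nonneg c, dist_nonneg (x := z) (y := zq),
    dist_nonneg (x := z) (y := ztil), sq_nonneg (dist z zq - 2 * dist z ztil),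
    sq_nonneg (5 * dist z zq - 4 * Real.sqrt c), mul_nonneg (by linarith : (0:ℝ) ≤ 2 * dist z ztil - dist z zq) (by positivity : (0:ℝ) ≤ 2 * dist z ztil + dist z zq)]
end
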